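/- Every feasible fractional solution x admits an MSM decomposition: there exists a family of nonnegative reals λ_{I,j}, indexed by monochromatic sequence matchings M_{I,j}, such that for every item i and every time t with max{i,k+1} ≤ t ≤ k+n, x_{i,t} = Σ{λ_{I,j} : M_{I,j} is an MSM with i ∈ I and M_{I,j}(i) = t}. -/

import Mathlib

open Finset

open scoped Classical in
/-- The next item of the same color as item `i`, or `k+n+2` if `i` is the last of its color. -/
noncomputable def nxt (k n : ℕ) (c : ℕ → ℕ) (i : ℕ) : ℕ :=
  if h : ∃ i', (i < i' ∧ i' ≤ n) ∧ c i' = c i then Nat.find h else k + n + 2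

/-- Feasibility of a fractional solution of the RBM linear program. -/
def Feasible (k n : ℕ) (c : ℕ → ℕ) (x : ℕ → ℕ → ℝ) : Prop :=
  (∀ i j, ¬(1 ≤ i ∧ i ≤ n ∧ max i (k+1) ≤ j ∧ j ≤ k + n) → x i j = 0) ∧
  (∀ i, 1 ≤ i → i ≤ n → ∑ j ∈ Finset.Icc (max i (k+1)) (k+n), x i j = 1) ∧
  (∀ j, k+1 ≤ j → j ≤ k+n → ∑ i ∈ Finset.Icc 1 (min j n), x i j = 1) ∧
  (∀ i, 1 ≤ i → i ≤ n → nxt k n c i ≤ n →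
    ∀ j, nxt k n c i ≤ j → x (nxt k n c i) j - x i (j-1) ≥ 0) ∧
  (∀ i j, 0 ≤ x i j)

/-- The cost `z(x)` of a fractional solution. -/
noncomputable def cost (k n : ℕ) (c : ℕ → ℕ) (x : ℕ → ℕ → ℝ) : ℝ :=
  ∑ i ∈ Finset.Icc 1 n, ∑ j ∈ Finset.Icc (max i (k+1)) (nxt k n c i - 2), x i j

/-- The weight `w_i^j` of item `i` at time `j`. -/
def weight (k : ℕ) (x : ℕ → ℕ → ℝ) (i j : ℕ) : ℝ :=
  1 - ∑ j' ∈ Finset.Icc (max i (k+1)) j, x i j'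

/-- The `s`-th item (0-based) of the chain of same-color items starting at item `i`:
`i, n(i), n(n(i)), …`. -/
noncomputable def chainItem (k n : ℕ) (c : ℕ → ℕ) (i s : ℕ) : ℕ := (nxt k n c)^[s] i

/-- `IsMSM k n c i m j` says that the maximal sequence `I = (i_1,…,i_m)` of consecutive
same-color items starting at `i_1 = i` (so `i_{s+1} = n(i_s)`), matched by
`M_{I,j}(i_s) = j + s`, is a monochromatic sequence matching (MSM): all items are genuine
input items, `j + s ≥ i_s` for all `s`, and `j + m < n(i_m) - 1`. -/
def IsMSM (k n : ℕ) (c : ℕ → ℕ) (i m j : ℕ) : Prop :=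
  1 ≤ i ∧ 1 ≤ m ∧ k ≤ j ∧ j + m ≤ k + n ∧
  (∀ s, s < m → chainItem k n c i s ≤ n) ∧
  (∀ s, s < m → chainItem k n c i s ≤ j + s + 1) ∧
  j + m + 1 < nxt k n c (chainItem k n c i (m - 1))

/-- The (finite) index set of candidate MSM triples `(i, m, j)`:
first item `i`, length `m`, start time `j`. -/
def msmTriples (k n : ℕ) : Finset (ℕ × ℕ × ℕ) :=
  (Finset.Icc 1 n) ×ˢ (Finset.Icc 1 n) ×ˢ (Finset.Icc k (k + n))

open scoped Classical in
/-- `lam` is an MSM decomposition of `x`: a family of nonnegative reals indexed by MSMs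
such that for every item `i` and time `t`,
`x_{i,t} = Σ { λ_{I,j} : M_{I,j} is an MSM with i ∈ I and M_{I,j}(i) = t }`. -/
def IsMSMDecomp (k n : ℕ) (c : ℕ → ℕ) (x : ℕ → ℕ → ℝ) (lam : ℕ × ℕ × ℕ → ℝ) : Prop :=
  (∀ p, 0 ≤ lam p) ∧
  (∀ p, ¬(p ∈ msmTriples k n ∧ IsMSM k n c p.1 p.2.1 p.2.2) → lam p = 0) ∧
  (∀ i t, 1 ≤ i → i ≤ n →
    x i t = ∑ p ∈ (msmTriples k n).filter
        (fun p => IsMSM k n c p.1 p.2.1 p.2.2 ∧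
          ∃ s, s < p.2.1 ∧ chainItem k n c p.1 s = i ∧ p.2.2 + s + 1 = t),
      lam p)

/-- `y_{i,j}`: equals `x_{i,j}` if `n(i) > j + 1`, and `0` otherwise. -/
noncomputable def yval (k n : ℕ) (c : ℕ → ℕ) (x : ℕ → ℕ → ℝ) (i j : ℕ) : ℝ :=
  if j + 1 < nxt k n c i then x i j else 0

/-- `F(t) = Σ_{j=k+1}^{t} Σ_{i ≤ j} y_{i,j}`, the cost accumulated by `x` up to time `t`. -/
noncomputable def Fval (k n : ℕ) (c : ℕ → ℕ) (x : ℕ → ℕ → ℝ) (t : ℕ) : ℝ :=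
  ∑ j ∈ Finset.Icc (k+1) t, ∑ i ∈ Finset.Icc 1 j, yval k n c x i j

/-! Constraint (3) says that mass is pushed forward along a color chain: `x_{n(i),t+1} ≥ x_{i,t}`
as soon as `n(i) ≤ t + 1`. Hence `x_{i,t}` splits into the inflow `x_{q,t-1}` from the
predecessor `q` of `i` (`n(q) = i`) and a nonnegative fresh mass. The fresh mass at `(i,t)`
starts one MSM, which follows the chain `i, n(i), n(n(i)), …` at times `t, t+1, …` for as long
as the mass is pushed forward; since `x` does not decrease along it, it stays inside the instance.
By induction on `t`, the MSMs through `(i,t)` are the one started there and those through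
`(q,t-1)`, so their weights add up to fresh mass plus inflow, that is to `x_{i,t}`. -/

section MSMDecomposition

open scoped Classical

variable {k n : ℕ} {c : ℕ → ℕ} {x : ℕ → ℕ → ℝ}

lemma nxt_le_or_eq (i : ℕ) : nxt k n c i ≤ n ∨ nxt k n c i = k + n + 2 := by
  unfold nxt
  split
  · next h => exact Or.inl (Nat.find_spec h).1.2
  · exact Or.inr rfl

lemma lt_nxt {i : ℕ} (h : nxt k n c i ≤ n) : i < nxt k n c i := by
  revert h
  unfold nxt
  split
  · next h => exact fun _ => (Nat.find_spec h).1.1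
  · omega

lemma color_nxt {i : ℕ} (h : nxt k n c i ≤ n) : c (nxt k n c i) = c i := by
  revert h
  unfold nxt
  split
  · next h => exact fun _ => (Nat.find_spec h).2
  · omega

lemma color_ne_of_lt_nxt {i i' : ℕ} (h1 : i < i') (h2 : i' < nxt k n c i) (h3 : i' ≤ n) :
    c i' ≠ c i := by
  revert h2
  unfold nxt
  split
  · next h => exact fun h2 hc => Nat.find_min h h2 ⟨⟨h1, h3⟩, hc⟩
  · next h => exact fun _ hc => h ⟨i', ⟨h1, h3⟩, hc⟩

lemma not_lt_of_nxt_eq {p q : ℕ} (hq : nxt k n c q ≤ n) (h : nxt k n c p = nxt k n c q) :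
    ¬ p < q := fun hpq =>
  color_ne_of_lt_nxt hpq (h ▸ lt_nxt hq) ((lt_nxt hq).le.trans hq)
    (by rw [← color_nxt hq, ← h, color_nxt (h.trans_le hq)])

lemma nxt_inj {p q : ℕ} (hq : nxt k n c q ≤ n) (h : nxt k n c p = nxt k n c q) : p = q :=
  le_antisymm (not_lt.1 (not_lt_of_nxt_eq (h.trans_le hq) h.symm))
    (not_lt.1 (not_lt_of_nxt_eq hq h))

@[simp] lemma chainItem_zero (i : ℕ) : chainItem k n c i 0 = i := rfl

lemma chainItem_succ (i s : ℕ) :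
    chainItem k n c i (s + 1) = nxt k n c (chainItem k n c i s) :=
  Function.iterate_succ_apply' _ _ _

lemma add_le_chainItem {i s : ℕ} (h : ∀ s' < s, nxt k n c (chainItem k n c i s') ≤ n) :
    i + s ≤ chainItem k n c i s := by
  induction s with
  | zero => simp
  | succ s ih =>
    have := ih fun s' hs' => h s' (by omega)
    have := lt_nxt (h s (by omega))
    rw [chainItem_succ]
    omega

/-- Constraint (3) pushes the mass of `x` at `(i, t)` on to `(n(i), t + 1)`. -/
def Forwards (k n : ℕ) (c : ℕ → ℕ) (i t : ℕ) : Prop :=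
  nxt k n c i ≤ n ∧ nxt k n c i ≤ t + 1

lemma exists_not_forwards (i t : ℕ) :
    ∃ s, ¬ Forwards k n c (chainItem k n c i s) (t + s) := by
  by_contra! h
  have := add_le_chainItem (i := i) (s := n + 1) fun s _ => (h s).1
  have hlast := (h (n + 1)).1
  have := lt_nxt hlast
  omega

noncomputable def runLength (k n : ℕ) (c : ℕ → ℕ) (i t : ℕ) : ℕ :=
  Nat.find (exists_not_forwards (k := k) (n := n) (c := c) i t)

lemma forwards_of_lt_runLength {i t s : ℕ} (hs : s < runLength k n c i t) :
    Forwards k n c (chainItem k n c i s) (t + s) :=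
  not_not.1 (Nat.find_min _ hs)

lemma not_forwards_runLength (i t : ℕ) :
    ¬ Forwards k n c (chainItem k n c i (runLength k n c i t)) (t + runLength k n c i t) :=
  Nat.find_spec (exists_not_forwards i t)

/-- The mass `x_{q,t-1}` pushed on to `(i, t)` from the predecessor `q` of `i`, if any. -/
noncomputable def inflow (k n : ℕ) (c : ℕ → ℕ) (x : ℕ → ℕ → ℝ) (i t : ℕ) : ℝ :=
  if h : ∃ q, nxt k n c q = i ∧ i ≤ n ∧ i ≤ t then x h.choose (t - 1) else 0

/-- The triple `p = (i₁, m, j)` is an MSM matching item `i` to time `t`. -/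
abbrev Covers (k n : ℕ) (c : ℕ → ℕ) (i t : ℕ) (p : ℕ × ℕ × ℕ) : Prop :=
  IsMSM k n c p.1 p.2.1 p.2.2 ∧ ∃ s, s < p.2.1 ∧ chainItem k n c p.1 s = i ∧ p.2.2 + s + 1 = t

lemma Covers.le {i t : ℕ} {p : ℕ × ℕ × ℕ} (h : Covers k n c i t p) : i ≤ n ∧ i ≤ t := by
  obtain ⟨hp, s, hs, rfl, rfl⟩ := h
  exact ⟨hp.2.2.2.2.1 s hs, hp.2.2.2.2.2.1 s hs⟩

lemma Covers.exists_pred {i j : ℕ} {p : ℕ × ℕ × ℕ} (h : Covers k n c i (j + 1) p)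
    (hj : p.2.2 ≠ j) : ∃ q, nxt k n c q = i ∧ Covers k n c q j p := by
  obtain ⟨hp, s, hs, hsi, hsj⟩ := h
  obtain ⟨s, rfl⟩ : ∃ s', s = s' + 1 := ⟨s - 1, by omega⟩
  exact ⟨chainItem k n c p.1 s, by rw [← chainItem_succ, hsi], hp, s, by omega, rfl, by omega⟩

lemma Covers.nxt {q j : ℕ} {p : ℕ × ℕ × ℕ} (h : Covers k n c q j p)
    (hq : nxt k n c q ≤ j + 1) : Covers k n c (nxt k n c q) (j + 1) p := by
  obtain ⟨hp, s, hs, rfl, rfl⟩ := h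
  have hlast := hp.2.2.2.2.2.2
  have hs' : s + 1 < p.2.1 := by
    by_contra hcon
    rw [show p.2.1 - 1 = s by omega] at hlast
    omega
  exact ⟨hp, s + 1, hs', chainItem_succ _ _, by omega⟩

lemma covers_succ_iff {q i j : ℕ} (hq : nxt k n c q = i) (hin : i ≤ n) (hij : i ≤ j + 1)
    (p : ℕ × ℕ × ℕ) : Covers k n c i (j + 1) p ∧ p.2.2 ≠ j ↔ Covers k n c q j p := by
  constructor
  · rintro ⟨h, hj⟩
    obtain ⟨q', hq', h'⟩ := h.exists_pred hj
    rwa [nxt_inj (hq.trans_le hin) (hq'.trans hq.symm)] at h'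
  · intro h
    obtain ⟨-, s, -, -, hs⟩ := id h
    exact ⟨hq ▸ h.nxt (hq.trans_le hij), by omega⟩

/-- The weight of the MSM started at `(i, j + 1)` by the fresh mass `x_{i,j+1} - inflow`;
all other triples get weight `0`. -/
noncomputable def msmWeight (k n : ℕ) (c : ℕ → ℕ) (x : ℕ → ℕ → ℝ) (p : ℕ × ℕ × ℕ) : ℝ :=
  if p ∈ msmTriples k n ∧ IsMSM k n c p.1 p.2.1 p.2.2 ∧
      p.2.1 = runLength k n c p.1 (p.2.2 + 1) + 1 then
    x p.1 (p.2.2 + 1) - inflow k n c x p.1 (p.2.2 + 1)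
  else 0

lemma msmWeight_eq_zero {p : ℕ × ℕ × ℕ}
    (h : ¬(p ∈ msmTriples k n ∧ IsMSM k n c p.1 p.2.1 p.2.2)) : msmWeight k n c x p = 0 :=
  if_neg fun h' => h ⟨h'.1, h'.2.1⟩

lemma sum_covers_continuing {j : ℕ}
    (ih : ∀ q, x q j = ∑ p ∈ (msmTriples k n).filter (Covers k n c q j), msmWeight k n c x p)
    (i : ℕ) :
    ∑ p ∈ ((msmTriples k n).filter (Covers k n c i (j + 1))).filter (fun p => ¬p.2.2 = j),
      msmWeight k n c x p = inflow k n c x i (j + 1) := by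
  unfold inflow
  split_ifs with h
  · obtain ⟨hq, hin, hij⟩ := h.choose_spec
    rw [Nat.add_sub_cancel, ih, filter_filter]
    exact sum_congr (filter_congr fun p _ => covers_succ_iff hq hin hij p) fun _ _ => rfl
  · refine sum_eq_zero fun p hp => ?_
    rw [mem_filter, mem_filter] at hp
    obtain ⟨q, hq, -⟩ := hp.1.2.exists_pred hp.2
    exact absurd ⟨q, hq, hp.1.2.le⟩ h

namespace Feasible

variable (hx : Feasible k n c x)
include hx

lemma nonneg (i t : ℕ) : 0 ≤ x i t := hx.2.2.2.2 i t

lemma bounds_of_pos {i t : ℕ} (h : 0 < x i t) :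
    1 ≤ i ∧ i ≤ n ∧ i ≤ t ∧ k + 1 ≤ t ∧ t ≤ k + n := by
  by_contra hc
  have := hx.1 i t fun ⟨h1, h2, h3, h4⟩ => hc ⟨h1, h2, by omega, by omega, h4⟩
  linarith

lemma le_x_nxt {i t : ℕ} (hi : 1 ≤ i) (hin : i ≤ n) (hf : Forwards k n c i t) :
    x i t ≤ x (nxt k n c i) (t + 1) := by
  have := hx.2.2.2.1 i hi hin hf.1 (t + 1) hf.2
  rw [Nat.add_sub_cancel] at this
  linarith

lemma inflow_nonneg (i t : ℕ) : 0 ≤ inflow k n c x i t := by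
  unfold inflow
  split_ifs
  exacts [hx.nonneg _ _, le_rfl]

lemma inflow_le (i t : ℕ) : inflow k n c x i t ≤ x i t := by
  unfold inflow
  split_ifs with h
  · obtain ⟨hq, hin, hit⟩ := h.choose_spec
    have hqi := lt_nxt (hq.trans_le hin)
    rcases Nat.eq_zero_or_pos h.choose with h0 | h0
    · rw [h0, hx.1 0 _ (by omega)]
      exact hx.nonneg i t
    · have := hx.le_x_nxt h0 (by omega) (t := t - 1) ⟨hq.trans_le hin, by omega⟩
      rwa [hq, show t - 1 + 1 = t by omega] at this
  · exact hx.nonneg i t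

lemma msmWeight_nonneg (p : ℕ × ℕ × ℕ) : 0 ≤ msmWeight k n c x p := by
  unfold msmWeight
  split_ifs
  · linarith [hx.inflow_le p.1 (p.2.2 + 1)]
  · exact le_rfl

lemma le_x_chainItem {i t : ℕ} (hpos : 0 < x i t) :
    ∀ s ≤ runLength k n c i t, x i t ≤ x (chainItem k n c i s) (t + s) := by
  intro s
  induction s with
  | zero => exact fun _ => le_rfl
  | succ s ih =>
    intro hs
    have ih := ih (by omega)
    obtain ⟨h1, h2, -⟩ := hx.bounds_of_pos (hpos.trans_le ih)
    rw [chainItem_succ, ← add_assoc]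
    exact ih.trans (hx.le_x_nxt h1 h2 (forwards_of_lt_runLength hs))

lemma isMSM_runLength {i j : ℕ} (hpos : 0 < x i (j + 1)) :
    (i, runLength k n c i (j + 1) + 1, j) ∈ msmTriples k n ∧
      IsMSM k n c i (runLength k n c i (j + 1) + 1) j := by
  set R := runLength k n c i (j + 1)
  have hchain : ∀ s ≤ R, 1 ≤ chainItem k n c i s ∧ chainItem k n c i s ≤ n ∧
      chainItem k n c i s ≤ j + 1 + s ∧ j + 1 + s ≤ k + n := fun s hs => by
    obtain ⟨h1, h2, h3, -, h5⟩ := hx.bounds_of_pos (hpos.trans_le (hx.le_x_chainItem hpos s hs))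
    exact ⟨h1, h2, h3, h5⟩
  obtain ⟨hi, -, -, hk, -⟩ := hx.bounds_of_pos hpos
  obtain ⟨-, hRn, -, hR⟩ := hchain R le_rfl
  have hlen : i + R ≤ chainItem k n c i R :=
    add_le_chainItem fun s hs => (forwards_of_lt_runLength hs).1
  have hend : j + 1 + R + 1 < nxt k n c (chainItem k n c i R) := by
    have hstop := not_forwards_runLength (k := k) (n := n) (c := c) i (j + 1)
    rcases nxt_le_or_eq (chainItem k n c i R) with h | h
    · exact lt_of_not_ge fun h' => hstop ⟨h, h'⟩
    · omega
  refine ⟨?_, hi, by omega, by omega, by omega, fun s hs => (hchain s (by omega)).2.1,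
    fun s hs => by have := (hchain s (by omega)).2.2.1; omega, ?_⟩
  · simp only [msmTriples, mem_product, mem_Icc]
    omega
  · rw [Nat.add_sub_cancel]
    omega

lemma sum_covers_start (i j : ℕ) :
    ∑ p ∈ ((msmTriples k n).filter (Covers k n c i (j + 1))).filter (fun p => p.2.2 = j),
      msmWeight k n c x p = x i (j + 1) - inflow k n c x i (j + 1) := by
  have hstart : ∀ p ∈ ((msmTriples k n).filter (Covers k n c i (j + 1))).filter
      (fun p => p.2.2 = j), p = (i, p.2.1, j) := by
    intro p hp
    simp only [mem_filter] at hp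
    obtain ⟨⟨-, -, s, -, hs, hsj⟩, hj⟩ := hp
    obtain rfl : s = 0 := by omega
    ext <;> simp_all
  rcases (hx.inflow_le i (j + 1)).eq_or_lt with h | h
  · rw [h, sub_self]
    refine sum_eq_zero fun p hp => ?_
    rw [hstart p hp]
    unfold msmWeight
    split_ifs <;> simp [h]
  · obtain ⟨hmem, hmsm⟩ := hx.isMSM_runLength (lt_of_le_of_lt (hx.inflow_nonneg i _) h)
    have ha : (i, runLength k n c i (j + 1) + 1, j) ∈
        ((msmTriples k n).filter (Covers k n c i (j + 1))).filter (fun p => p.2.2 = j) := by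
      rw [mem_filter, mem_filter]
      exact ⟨⟨hmem, hmsm, 0, Nat.succ_pos _, rfl, rfl⟩, rfl⟩
    rw [sum_eq_single_of_mem _ ha]
    · exact if_pos ⟨hmem, hmsm, rfl⟩
    · intro p hp hpa
      rw [hstart p hp] at hpa ⊢
      refine if_neg fun hp' => hpa ?_
      rw [hp'.2.2]

lemma eq_sum_covers (t i : ℕ) :
    x i t = ∑ p ∈ (msmTriples k n).filter (Covers k n c i t), msmWeight k n c x p := by
  induction t generalizing i with
  | zero =>
    rw [hx.1 i 0 (by omega), sum_eq_zero]
    intro p hp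
    obtain ⟨-, s, -, -, h⟩ := (mem_filter.1 hp).2
    omega
  | succ j ih =>
    rw [← sum_filter_add_sum_filter_not _ (fun p => p.2.2 = j), hx.sum_covers_start,
      sum_covers_continuing ih]
    ring

end Feasible

end MSMDecomposition

open scoped Classical in
theorem stmt7_general (k n : ℕ) (c : ℕ → ℕ) (x : ℕ → ℕ → ℝ)
    (hx : Feasible k n c x) :
    ∃ lam : ℕ × ℕ × ℕ → ℝ,
      (∀ p, 0 ≤ lam p) ∧
      (∀ p, ¬(p ∈ msmTriples k n ∧ IsMSM k n c p.1 p.2.1 p.2.2) → lam p = 0) ∧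
      (∀ i t, 1 ≤ i → i ≤ n → max i (k+1) ≤ t → t ≤ k + n →
        x i t = ∑ p ∈ (msmTriples k n).filter
            (fun p => IsMSM k n c p.1 p.2.1 p.2.2 ∧
              ∃ s, s < p.2.1 ∧ chainItem k n c p.1 s = i ∧ p.2.2 + s + 1 = t),
          lam p) :=
  ⟨msmWeight k n c x, hx.msmWeight_nonneg, fun _ => msmWeight_eq_zero,
    fun i t _ _ _ _ => hx.eq_sum_covers t i⟩

open scoped Classical in
/-- Every feasible fractional solution admits an MSM decomposition: a family of
nonnegative reals `λ`, indexed by monochromatic sequence matchings, such that for every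
item `i` and every time `t` with `max{i,k+1} ≤ t ≤ k+n`,
`x_{i,t} = Σ { λ_{I,j} : M_{I,j} is an MSM with i ∈ I and M_{I,j}(i) = t }`. -/
theorem stmt7 (k n : ℕ) (hk : 1 ≤ k) (hn : 1 ≤ n) (c : ℕ → ℕ) (x : ℕ → ℕ → ℝ)
    (hx : Feasible k n c x) :
    ∃ lam : ℕ × ℕ × ℕ → ℝ,
      (∀ p, 0 ≤ lam p) ∧
      (∀ p, ¬(p ∈ msmTriples k n ∧ IsMSM k n c p.1 p.2.1 p.2.2) → lam p = 0) ∧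
      (∀ i t, 1 ≤ i → i ≤ n → max i (k+1) ≤ t → t ≤ k + n →
        x i t = ∑ p ∈ (msmTriples k n).filter
            (fun p => IsMSM k n c p.1 p.2.1 p.2.2 ∧
              ∃ s, s < p.2.1 ∧ chainItem k n c p.1 s = i ∧ p.2.2 + s + 1 = t),
          lam p) :=
  stmt7_general k n c x hx
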